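/- Let γ be a real number. If Q̊(φ) ≥ γ ‖φ‖² for every traceless symmetric bilinear form φ on E, then R(X,Y,X,Y) ≥ γ for every pair of orthonormal vectors X, Y ∈ E. -/
import Mathlib


open scoped RealInnerProductSpace

/-- If `Q̊(φ) ≥ γ ‖φ‖²` for every traceless symmetric bilinear form `φ`,
then `R(X,Y,X,Y) ≥ γ` for every pair of orthonormal vectors `X, Y`. -/
theorem stmt_9
    {E : Type*} [NormedAddCommGroup E] [InnerProductSpace ℝ E]
    {n : ℕ} (hn : 2 ≤ n) (e : OrthonormalBasis (Fin n) ℝ E)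
    (R : E →ₗ[ℝ] E →ₗ[ℝ] E →ₗ[ℝ] E →ₗ[ℝ] ℝ)
    (hR1 : ∀ X Y Z W : E, R X Y Z W = - R Y X Z W)
    (hR2 : ∀ X Y Z W : E, R X Y Z W = - R X Y W Z)
    (hR3 : ∀ X Y Z W : E, R X Y Z W = R Z W X Y)
    (hR4 : ∀ X Y Z W : E, R X Y Z W + R Y Z X W + R Z X Y W = 0)
    (γ : ℝ)
    (hQ : ∀ φ : E →ₗ[ℝ] E →ₗ[ℝ] ℝ, (∀ X Y : E, φ X Y = φ Y X) →
      (∑ i, φ (e i) (e i)) = 0 →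
      γ * (∑ i, ∑ j, (φ (e i) (e j)) ^ 2) ≤
        ∑ i, ∑ j, ∑ k, ∑ l, R (e i) (e k) (e l) (e j) * φ (e k) (e l) * φ (e i) (e j)) :
    ∀ X Y : E, ‖X‖ = 1 → ‖Y‖ = 1 → ⟪X, Y⟫ = 0 → γ ≤ R X Y X Y := by
  intro X Y hX hY hXY
  set a : Fin n → ℝ := fun i => ⟪e i, X⟫ with ha
  set b : Fin n → ℝ := fun i => ⟪e i, Y⟫ with hb
  have hsum : ∀ u v : E, ∑ i, ⟪e i, u⟫ * ⟪e i, v⟫ = ⟪u, v⟫ := by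
    intro u v
    have := e.sum_inner_mul_inner u v
    simpa [real_inner_comm u] using this
  have ha2 : ∑ i, a i * a i = 1 := by
    rw [hsum X X, real_inner_self_eq_norm_sq, hX]; norm_num
  have hb2 : ∑ i, b i * b i = 1 := by
    rw [hsum Y Y, real_inner_self_eq_norm_sq, hY]; norm_num
  have hab : ∑ i, a i * b i = 0 := by rw [hsum X Y, hXY]
  -- the test form
  set φ : E →ₗ[ℝ] E →ₗ[ℝ] ℝ := LinearMap.mk₂ ℝ
    (fun u v => ⟪u, X⟫ * ⟪v, Y⟫ + ⟪u, Y⟫ * ⟪v, X⟫)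
    (by intros; simp [inner_add_left]; ring)
    (by intros; simp [real_inner_smul_left]; ring)
    (by intros; simp [inner_add_left]; ring)
    (by intros; simp [real_inner_smul_left]; ring) with hφ
  have hφapp : ∀ u v : E, φ u v = ⟪u, X⟫ * ⟪v, Y⟫ + ⟪u, Y⟫ * ⟪v, X⟫ := by
    intro u v; simp [hφ]
  have hsymm : ∀ u v : E, φ u v = φ v u := by
    intro u v; rw [hφapp, hφapp]; ring
  have htr : (∑ i, φ (e i) (e i)) = 0 := by
    have : (∑ i, φ (e i) (e i)) = ∑ i, (a i * b i + a i * b i) := by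
      apply Finset.sum_congr rfl; intro i _; rw [hφapp]; ring
    rw [this, Finset.sum_add_distrib, hab]; norm_num
  -- norm squared = 2
  have hS : (∑ i, ∑ j, (φ (e i) (e j)) ^ 2) = 2 := by
    have h1 : (∑ i, ∑ j, (φ (e i) (e j)) ^ 2)
        = (∑ i, a i * a i) * (∑ j, b j * b j)
          + 2 * ((∑ i, a i * b i) * (∑ j, a j * b j))
          + (∑ i, b i * b i) * (∑ j, a j * a j) := by
      rw [Finset.sum_mul_sum, Finset.sum_mul_sum, Finset.sum_mul_sum, Finset.mul_sum]
      rw [← Finset.sum_add_distrib, ← Finset.sum_add_distrib]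
      apply Finset.sum_congr rfl; intro i _
      rw [Finset.mul_sum, ← Finset.sum_add_distrib, ← Finset.sum_add_distrib]
      apply Finset.sum_congr rfl; intro j _
      rw [hφapp]; simp only [ha, hb]; ring
    rw [h1, ha2, hb2, hab]; norm_num
  -- expansion lemma
  have expand : ∀ v1 v2 v3 v4 : E, R v1 v2 v3 v4 =
      ∑ i, ∑ j, ∑ k, ∑ l, R (e i) (e k) (e l) (e j) *
        (⟪e i, v1⟫ * ⟪e k, v2⟫ * ⟪e l, v3⟫ * ⟪e j, v4⟫) := by
    intro v1 v2 v3 v4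
    have h0 : R v1 v2 v3 v4 =
        ∑ j, ∑ l, ∑ k, ∑ i, R (e i) (e k) (e l) (e j) *
          (⟪e i, v1⟫ * ⟪e k, v2⟫ * ⟪e l, v3⟫ * ⟪e j, v4⟫) := by
      conv_lhs => rw [← e.sum_repr' v1, ← e.sum_repr' v2, ← e.sum_repr' v3,
        ← e.sum_repr' v4]
      simp only [map_sum, LinearMap.sum_apply, map_smul, LinearMap.smul_apply,
        smul_eq_mul, Finset.mul_sum]
      apply Finset.sum_congr rfl; intro j _
      apply Finset.sum_congr rfl; intro l _
      apply Finset.sum_congr rfl; intro k _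
      apply Finset.sum_congr rfl; intro i _
      ring
    calc R v1 v2 v3 v4
        = ∑ j, ∑ l, ∑ k, ∑ i, R (e i) (e k) (e l) (e j) *
            (⟪e i, v1⟫ * ⟪e k, v2⟫ * ⟪e l, v3⟫ * ⟪e j, v4⟫) := h0
      _ = ∑ j, ∑ l, ∑ i, ∑ k, _ := Finset.sum_congr rfl fun j _ =>
            Finset.sum_congr rfl fun l _ => Finset.sum_comm
      _ = ∑ j, ∑ i, ∑ l, ∑ k, _ := Finset.sum_congr rfl fun j _ => Finset.sum_comm
      _ = ∑ i, ∑ j, ∑ l, ∑ k, _ := Finset.sum_comm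
      _ = ∑ i, ∑ j, ∑ k, ∑ l, R (e i) (e k) (e l) (e j) *
            (⟪e i, v1⟫ * ⟪e k, v2⟫ * ⟪e l, v3⟫ * ⟪e j, v4⟫) :=
            Finset.sum_congr rfl fun i _ => Finset.sum_congr rfl fun j _ =>
              Finset.sum_comm
  -- curvature term equals 2 * R X Y X Y
  have hsymR : ∀ u v : E, R u u v v = 0 := by
    intro u v
    have := hR1 u u v v; linarith
  have hswap : R Y X Y X = R X Y X Y := by
    rw [hR1 Y X Y X, hR2 X Y Y X]; ring
  have hT : (∑ i, ∑ j, ∑ k, ∑ l,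
      R (e i) (e k) (e l) (e j) * φ (e k) (e l) * φ (e i) (e j))
      = R X X Y Y + R Y X Y X + R X Y X Y + R Y Y X X := by
    rw [expand X X Y Y, expand Y X Y X, expand X Y X Y, expand Y Y X X]
    rw [← Finset.sum_add_distrib, ← Finset.sum_add_distrib, ← Finset.sum_add_distrib]
    apply Finset.sum_congr rfl; intro i _
    rw [← Finset.sum_add_distrib, ← Finset.sum_add_distrib, ← Finset.sum_add_distrib]
    apply Finset.sum_congr rfl; intro j _
    rw [← Finset.sum_add_distrib, ← Finset.sum_add_distrib, ← Finset.sum_add_distrib]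
    apply Finset.sum_congr rfl; intro k _
    rw [← Finset.sum_add_distrib, ← Finset.sum_add_distrib, ← Finset.sum_add_distrib]
    apply Finset.sum_congr rfl; intro l _
    rw [hφapp, hφapp]; ring
  have := hQ φ hsymm htr
  rw [hS, hT, hsymR X Y, hsymR Y X, hswap] at this
  linarith
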